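/- arXiv:1410.2076 — 2 statements merged into one kernel-verified Lean document; each statement's English description precedes it below -/
import Mathlib

section
/- Let d ≥ 1 and let X_q, X_p : ℝ^d × ℝ^d → ℝ^d be continuously differentiable. Then the pair X = (X_q, X_p) is Hamiltonian (i.e., there exists a twice continuously differentiable H : ℝ^d × ℝ^d → ℝ with X_q(x,y) = ∂H/∂y(x,y) and X_p(x,y) = −∂H/∂x(x,y) for all (x,y) ∈ ℝ^d × ℝ^d) if and only if X satisfies the Hamiltonian Helmholtz conditions at every point (x,y) ∈ ℝ^d × ℝ^d: ∂X_q/∂x(x,y) + (∂X_p/∂y(x,y))ᵀ = 0, and the d × d matrices ∂X_q/∂y(x,y) and ∂X_p/∂x(x,y) are symmetric. -/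
open scoped RealInnerProductSpace

/-- The Jacobian block of the total derivative of `F` at `z` corresponding to the
first factor (`∂F/∂x(z)`), as a continuous linear map. -/
noncomputable def pderivFst {d m : ℕ}
    (F : EuclideanSpace ℝ (Fin d) × EuclideanSpace ℝ (Fin d) → EuclideanSpace ℝ (Fin m))
    (z : EuclideanSpace ℝ (Fin d) × EuclideanSpace ℝ (Fin d)) :
    EuclideanSpace ℝ (Fin d) →L[ℝ] EuclideanSpace ℝ (Fin m) :=
  (fderiv ℝ F z).comp (ContinuousLinearMap.inl ℝ _ _)

/-- The Jacobian block of the total derivative of `F` at `z` corresponding to the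
second factor (`∂F/∂y(z)`), as a continuous linear map. -/
noncomputable def pderivSnd {d m : ℕ}
    (F : EuclideanSpace ℝ (Fin d) × EuclideanSpace ℝ (Fin d) → EuclideanSpace ℝ (Fin m))
    (z : EuclideanSpace ℝ (Fin d) × EuclideanSpace ℝ (Fin d)) :
    EuclideanSpace ℝ (Fin d) →L[ℝ] EuclideanSpace ℝ (Fin m) :=
  (fderiv ℝ F z).comp (ContinuousLinearMap.inr ℝ _ _)

/-- The Hamiltonian Helmholtz conditions for the pair `X = (Xq, Xp)`:
`∂Xq/∂x + (∂Xp/∂y)ᵀ = 0`, and `∂Xq/∂y`, `∂Xp/∂x` are symmetric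
(transposition being the adjoint with respect to the Euclidean inner product). -/
def HelmholtzConditions {d : ℕ}
    (Xq Xp : EuclideanSpace ℝ (Fin d) × EuclideanSpace ℝ (Fin d) → EuclideanSpace ℝ (Fin d)) :
    Prop :=
  ∀ z : EuclideanSpace ℝ (Fin d) × EuclideanSpace ℝ (Fin d),
    pderivFst Xq z + ContinuousLinearMap.adjoint (pderivSnd Xp z) = 0 ∧
    ContinuousLinearMap.adjoint (pderivSnd Xq z) = pderivSnd Xq z ∧
    ContinuousLinearMap.adjoint (pderivFst Xp z) = pderivFst Xp z

/-- `X = (Xq, Xp)` is a Hamiltonian vector field: there is a twice continuously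
differentiable `H` with `Xq = ∂H/∂y` and `Xp = −∂H/∂x` (partial gradients). -/
def IsHamiltonianPair {d : ℕ}
    (Xq Xp : EuclideanSpace ℝ (Fin d) × EuclideanSpace ℝ (Fin d) → EuclideanSpace ℝ (Fin d)) :
    Prop :=
  ∃ H : EuclideanSpace ℝ (Fin d) × EuclideanSpace ℝ (Fin d) → ℝ,
    ContDiff ℝ 2 H ∧
    ∀ z : EuclideanSpace ℝ (Fin d) × EuclideanSpace ℝ (Fin d),
      HasGradientAt (fun y => H (z.1, y)) (Xq z) z.2 ∧
      HasGradientAt (fun x => H (x, z.2)) (-(Xp z)) z.1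

/-! A pair `(Xq, Xp)` is Hamiltonian with Hamiltonian `H` exactly when `H` is a primitive of the
1-form `ω = ⟪Xq, dy⟫ - ⟪Xp, dx⟫`, and the Helmholtz conditions say exactly that the bilinear form
`dω(w)` is symmetric, i.e. that `ω` is closed. Necessity is then the symmetry of the second
derivative of a `C²` function; sufficiency is the Poincaré lemma on the convex space
`ℝ^d × ℝ^d`, the primitive being `C²` because its derivative `ω` is `C¹`. -/

open ContinuousLinearMap

section InnerProductSpace

variable {E F : Type*} [NormedAddCommGroup E] [InnerProductSpace ℝ E]

/-- With `A, B` the blocks of `dXq` and `P, Q` those of `dXp`, the left-hand side says that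
`d(hamiltonianForm Xq Xp)` is symmetric. -/
theorem inner_block_symm_iff [CompleteSpace E] (A B P Q : E →L[ℝ] E) :
    (∀ a b a' b' : E,
        ⟪A a + B b, b'⟫ - ⟪P a + Q b, a'⟫ = ⟪A a' + B b', b⟫ - ⟪P a' + Q b', a⟫) ↔
      A + adjoint Q = 0 ∧ adjoint B = B ∧ adjoint P = P := by
  rw [add_eq_zero_iff_neg_eq, eq_comm (a := adjoint B), eq_comm (a := adjoint P),
    eq_adjoint_iff, eq_adjoint_iff, eq_adjoint_iff]
  simp only [neg_apply, inner_neg_left, inner_add_left, real_inner_comm (Q _),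
    real_inner_comm (B _), real_inner_comm (P _)]
  constructor
  · intro h
    refine ⟨fun a b' => ?_, fun b b' => ?_, fun a a' => ?_⟩
    · have := h a 0 0 b'
      simp only [map_zero, inner_zero_left, inner_zero_right] at this
      linarith
    · have := h 0 b 0 b'
      simp only [map_zero, inner_zero_left, inner_zero_right] at this
      linarith
    · have := h a 0 a' 0
      simp only [map_zero, inner_zero_left, inner_zero_right] at this
      linarith
  · rintro ⟨hAQ, hB, hP⟩ a b a' b'
    linarith [hAQ a b', hAQ a' b, hB b b', hP a a']

theorem HasFDerivAt.hasGradientAt_right_iff [NormedAddCommGroup F] [InnerProductSpace ℝ F]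
    [CompleteSpace F] {H : E × F → ℝ} {L : E × F →L[ℝ] ℝ} {z : E × F}
    (hH : HasFDerivAt H L z) (g : F) :
    HasGradientAt (fun y => H (z.1, y)) g z.2 ↔ ∀ v, L (0, v) = ⟪g, v⟫ := by
  have hL : HasFDerivAt (fun y => H (z.1, y)) (L.comp (inr ℝ E F)) z.2 :=
    hH.comp z.2 (hasFDerivAt_prodMk_right (𝕜 := ℝ) z.1 z.2)
  rw [hasGradientAt_iff_hasFDerivAt]
  refine ⟨fun h v => ?_, fun h => ?_⟩
  · simpa using congr($(hL.unique h) v)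
  · have hg : InnerProductSpace.toDual ℝ F g = L.comp (inr ℝ E F) := by
      ext v
      simp [h]
    rwa [hg]

theorem HasFDerivAt.hasGradientAt_left_iff [CompleteSpace E] [NormedAddCommGroup F]
    [NormedSpace ℝ F] {H : E × F → ℝ} {L : E × F →L[ℝ] ℝ} {z : E × F}
    (hH : HasFDerivAt H L z) (g : E) :
    HasGradientAt (fun x => H (x, z.2)) g z.1 ↔ ∀ v, L (v, 0) = ⟪g, v⟫ := by
  have hL : HasFDerivAt (fun x => H (x, z.2)) (L.comp (inl ℝ E F)) z.1 :=
    hH.comp z.1 (hasFDerivAt_prodMk_left (𝕜 := ℝ) z.1 z.2)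
  rw [hasGradientAt_iff_hasFDerivAt]
  refine ⟨fun h v => ?_, fun h => ?_⟩
  · simpa using congr($(hL.unique h) v)
  · have hg : InnerProductSpace.toDual ℝ E g = L.comp (inl ℝ E F) := by
      ext v
      simp [h]
    rwa [hg]

/-- The 1-form `⟪Xq, dy⟫ - ⟪Xp, dx⟫`, whose primitives are the Hamiltonians of `(Xq, Xp)`. -/
noncomputable def hamiltonianForm (Xq Xp : E × E → E) (w : E × E) : E × E →L[ℝ] ℝ :=
  (innerSL ℝ (Xq w)).comp (snd ℝ E E) - (innerSL ℝ (Xp w)).comp (fst ℝ E E)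

variable {Xq Xp : E × E → E}

@[simp]
theorem hamiltonianForm_apply (w u : E × E) :
    hamiltonianForm Xq Xp w u = ⟪Xq w, u.2⟫ - ⟪Xp w, u.1⟫ := rfl

theorem ContDiff.hamiltonianForm {n : WithTop ℕ∞} (hXq : ContDiff ℝ n Xq)
    (hXp : ContDiff ℝ n Xp) : ContDiff ℝ n (hamiltonianForm Xq Xp) :=
  (((innerSL ℝ).contDiff.comp hXq).clm_comp contDiff_const).sub
    (((innerSL ℝ).contDiff.comp hXp).clm_comp contDiff_const)

theorem fderiv_hamiltonianForm_apply {w : E × E} (hXq : DifferentiableAt ℝ Xq w)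
    (hXp : DifferentiableAt ℝ Xp w) (u v : E × E) :
    fderiv ℝ (hamiltonianForm Xq Xp) w u v =
      ⟪fderiv ℝ Xq w u, v.2⟫ - ⟪fderiv ℝ Xp w u, v.1⟫ := by
  have hq := ((innerSL ℝ).hasFDerivAt.comp w hXq.hasFDerivAt).clm_comp
    (hasFDerivAt_const (snd ℝ E E) w)
  have hp := ((innerSL ℝ).hasFDerivAt.comp w hXp.hasFDerivAt).clm_comp
    (hasFDerivAt_const (fst ℝ E E) w)
  have h : HasFDerivAt (hamiltonianForm Xq Xp) _ w := hq.sub hp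
  rw [h.fderiv]
  simp
  rfl

theorem hasFDerivAt_hamiltonianForm_iff [CompleteSpace E] {H : E × E → ℝ} {z : E × E}
    (hH : DifferentiableAt ℝ H z) :
    HasFDerivAt H (hamiltonianForm Xq Xp z) z ↔
      HasGradientAt (fun y => H (z.1, y)) (Xq z) z.2 ∧
        HasGradientAt (fun x => H (x, z.2)) (-Xp z) z.1 := by
  rw [hH.hasFDerivAt.hasGradientAt_right_iff, hH.hasFDerivAt.hasGradientAt_left_iff]
  refine ⟨fun h => ?_, fun ⟨hq, hp⟩ => ?_⟩
  · simp [h.fderiv]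
  · convert hH.hasFDerivAt using 1
    ext u <;> simp [hq, hp]

end InnerProductSpace

section EuclideanSpace

variable {d : ℕ}

theorem fderiv_apply_eq_pderivFst_add_pderivSnd {m : ℕ}
    (F : EuclideanSpace ℝ (Fin d) × EuclideanSpace ℝ (Fin d) → EuclideanSpace ℝ (Fin m))
    (z u : EuclideanSpace ℝ (Fin d) × EuclideanSpace ℝ (Fin d)) :
    fderiv ℝ F z u = pderivFst F z u.1 + pderivSnd F z u.2 := by
  rw [pderivFst, pderivSnd, comp_apply, comp_apply, ← map_add, inl_apply, inr_apply,
    Prod.mk_add_mk, add_zero, zero_add]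

variable {Xq Xp : EuclideanSpace ℝ (Fin d) × EuclideanSpace ℝ (Fin d) → EuclideanSpace ℝ (Fin d)}

theorem helmholtzConditions_iff (hXq : Differentiable ℝ Xq) (hXp : Differentiable ℝ Xp) :
    HelmholtzConditions Xq Xp ↔ ∀ w u v,
      fderiv ℝ (hamiltonianForm Xq Xp) w u v = fderiv ℝ (hamiltonianForm Xq Xp) w v u := by
  refine forall_congr' fun w => ?_
  simp only [fderiv_hamiltonianForm_apply (hXq w) (hXp w),
    fderiv_apply_eq_pderivFst_add_pderivSnd, Prod.forall]
  exact (inner_block_symm_iff _ _ _ _).symm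

theorem isHamiltonianPair_iff : IsHamiltonianPair Xq Xp ↔
    ∃ H, ContDiff ℝ 2 H ∧ ∀ z, HasFDerivAt H (hamiltonianForm Xq Xp z) z :=
  exists_congr fun _ => and_congr_right fun hH => forall_congr' fun z =>
    (hasFDerivAt_hamiltonianForm_iff (hH.differentiable two_ne_zero z)).symm

end EuclideanSpace

theorem hamiltonian_iff_helmholtz_general {d : ℕ}
    (Xq Xp : EuclideanSpace ℝ (Fin d) × EuclideanSpace ℝ (Fin d) → EuclideanSpace ℝ (Fin d))
    (hXq : ContDiff ℝ 1 Xq) (hXp : ContDiff ℝ 1 Xp) :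
    IsHamiltonianPair Xq Xp ↔ HelmholtzConditions Xq Xp := by
  have hω : ContDiff ℝ 1 (hamiltonianForm Xq Xp) := hXq.hamiltonianForm hXp
  rw [isHamiltonianPair_iff, helmholtzConditions_iff (hXq.differentiable one_ne_zero)
    (hXp.differentiable one_ne_zero)]
  constructor
  · rintro ⟨H, hH, hHω⟩ w u v
    have hdH : fderiv ℝ H = hamiltonianForm Xq Xp := funext fun z => (hHω z).fderiv
    rw [← hdH]
    exact (hH.contDiffAt.isSymmSndFDerivAt (by simp)).eq u v
  · intro hsymm
    obtain ⟨H, hH⟩ := convex_univ.exists_forall_hasFDerivAt_of_fderiv_symmetric isOpen_univ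
      (hω.differentiable one_ne_zero).differentiableOn fun w _ => hsymm w
    exact ⟨H, contDiff_succ_iff_hasFDerivAt.2 ⟨_, hω, fun z => hH z trivial⟩,
      fun z => hH z trivial⟩

theorem hamiltonian_iff_helmholtz {d : ℕ} (hd : 1 ≤ d)
    (Xq Xp : EuclideanSpace ℝ (Fin d) × EuclideanSpace ℝ (Fin d) → EuclideanSpace ℝ (Fin d))
    (hXq : ContDiff ℝ 1 Xq) (hXp : ContDiff ℝ 1 Xp) :
    IsHamiltonianPair Xq Xp ↔ HelmholtzConditions Xq Xp :=
  hamiltonian_iff_helmholtz_general Xq Xp hXq hXp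
end

section
/- (Integration by parts with a backward shift.) Assume ρ is Δ-differentiable at every t ∈ 𝕋^κ. Let f : 𝕋 → ℝ^n be ∇-differentiable at every t ∈ 𝕋_κ and g : 𝕋 → ℝ^n be Δ-differentiable at every t ∈ 𝕋^κ. Let c, d ∈ 𝕋 with σ(a) ≤ c ≤ d, and suppose F, G : 𝕋 → ℝ are Δ-differentiable at every t ∈ 𝕋^κ_κ with F^Δ(t) = ⟨f(t), g^Δ(t)⟩ and G^Δ(t) = ρ^Δ(t)·⟨f^∇(t), g(t)⟩ for all t ∈ 𝕋^κ_κ. Then F(d) − F(c) = ⟨f(ρ(d)), g(d)⟩ − ⟨f(ρ(c)), g(c)⟩ − (G(d) − G(c)); equivalently, ∫_c^d ⟨f(t), g^Δ(t)⟩ Δt = [⟨f(ρ(t)), g(t)⟩]_{t=c}^{t=d} − ∫_c^d ρ^Δ(t)⟨f^∇(t), g(t)⟩ Δt. -/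
open Set Filter Topology

/-- Forward jump operator of the time scale `T` (with `b = sSup T`). -/
noncomputable def tsSigma (T : Set ℝ) (t : ℝ) : ℝ :=
  if t < sSup T then sInf {s | s ∈ T ∧ t < s} else sSup T

/-- Backward jump operator of the time scale `T` (with `a = sInf T`). -/
noncomputable def tsRho (T : Set ℝ) (t : ℝ) : ℝ :=
  if sInf T < t then sSup {s | s ∈ T ∧ s < t} else sInf T

/-- `𝕋^κ = 𝕋 \ (ρ(b), b]`. -/
def tsK (T : Set ℝ) : Set ℝ := T \ Ioc (tsRho T (sSup T)) (sSup T)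

/-- `𝕋_κ = 𝕋 \ [a, σ(a))`. -/
def tsKd (T : Set ℝ) : Set ℝ := T \ Ico (sInf T) (tsSigma T (sInf T))

/-- `𝕋^κ_κ = 𝕋^κ ∩ 𝕋_κ`. -/
def tsKK (T : Set ℝ) : Set ℝ := tsK T ∩ tsKd T

/-- `u` is Δ-differentiable at `t` with Δ-derivative `L`. -/
def HasDeltaDerivAt {E : Type*} [NormedAddCommGroup E] [NormedSpace ℝ E]
    (T : Set ℝ) (u : ℝ → E) (t : ℝ) (L : E) : Prop :=
  Tendsto (fun s => (tsSigma T t - s)⁻¹ • (u (tsSigma T t) - u s))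
    (𝓝[T \ {tsSigma T t}] t) (𝓝 L)

/-- `u` is ∇-differentiable at `t` with ∇-derivative `L`. -/
def HasNablaDerivAt {E : Type*} [NormedAddCommGroup E] [NormedSpace ℝ E]
    (T : Set ℝ) (u : ℝ → E) (t : ℝ) (L : E) : Prop :=
  Tendsto (fun s => (s - tsRho T t)⁻¹ • (u s - u (tsRho T t)))
    (𝓝[T \ {tsRho T t}] t) (𝓝 L)

/-- `u` is rd-continuous on the time scale `T`. -/
def RdContinuous {E : Type*} [NormedAddCommGroup E] [NormedSpace ℝ E]
    (T : Set ℝ) (u : ℝ → E) : Prop :=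
  (∀ t ∈ T, tsSigma T t = t → ContinuousWithinAt u T t) ∧
  (∀ t ∈ T, tsRho T t = t → ∃ L : E, Tendsto u (𝓝[T ∩ Iio t] t) (𝓝 L))

/-- `u` is ld-continuous on the time scale `T`. -/
def LdContinuous {E : Type*} [NormedAddCommGroup E] [NormedSpace ℝ E]
    (T : Set ℝ) (u : ℝ → E) : Prop :=
  (∀ t ∈ T, tsRho T t = t → ContinuousWithinAt u T t) ∧
  (∀ t ∈ T, tsSigma T t = t → ∃ L : E, Tendsto u (𝓝[T ∩ Ioi t] t) (𝓝 L))

section TSAux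
variable {T : Set ℝ} (hclosed : IsClosed T) (hbdd : Bornology.IsBounded T) (hne : T.Nonempty)
include hclosed hbdd hne
set_option linter.unusedSectionVars false

lemma ts_le_sSup {t : ℝ} (ht : t ∈ T) : t ≤ sSup T := le_csSup hbdd.bddAbove ht
lemma ts_sInf_le {t : ℝ} (ht : t ∈ T) : sInf T ≤ t := csInf_le hbdd.bddBelow ht
lemma ts_sSup_mem : sSup T ∈ T := hclosed.csSup_mem hne hbdd.bddAbove
lemma ts_sInf_mem : sInf T ∈ T := hclosed.csInf_mem hne hbdd.bddBelow

lemma tsSigma_mem {t : ℝ} : tsSigma T t ∈ T := by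
  unfold tsSigma
  split
  · rename_i h
    have hsub : {s | s ∈ T ∧ t < s} ⊆ T := fun s hs => hs.1
    have hnonempty : {s | s ∈ T ∧ t < s}.Nonempty := ⟨sSup T, ts_sSup_mem hclosed hbdd hne, h⟩
    have hbb : BddBelow {s | s ∈ T ∧ t < s} := hbdd.bddBelow.mono hsub
    have := csInf_mem_closure hnonempty hbb
    exact hclosed.closure_subset (closure_mono hsub this)
  · exact ts_sSup_mem hclosed hbdd hne

lemma tsRho_mem {t : ℝ} : tsRho T t ∈ T := by
  unfold tsRho
  split
  · rename_i h
    have hsub : {s | s ∈ T ∧ s < t} ⊆ T := fun s hs => hs.1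
    have hnonempty : {s | s ∈ T ∧ s < t}.Nonempty := ⟨sInf T, ts_sInf_mem hclosed hbdd hne, h⟩
    have hba : BddAbove {s | s ∈ T ∧ s < t} := hbdd.bddAbove.mono hsub
    have := csSup_mem_closure hnonempty hba
    exact hclosed.closure_subset (closure_mono hsub this)
  · exact ts_sInf_mem hclosed hbdd hne

lemma le_tsSigma {t : ℝ} (ht : t ∈ T) : t ≤ tsSigma T t := by
  unfold tsSigma
  split
  · exact le_csInf ⟨sSup T, ts_sSup_mem hclosed hbdd hne, by assumption⟩ fun s hs => hs.2.le
  · exact ts_le_sSup hclosed hbdd hne ht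

lemma tsRho_le {t : ℝ} (ht : t ∈ T) : tsRho T t ≤ t := by
  unfold tsRho
  split
  · exact csSup_le ⟨sInf T, ts_sInf_mem hclosed hbdd hne, by assumption⟩ fun s hs => hs.2.le
  · exact ts_sInf_le hclosed hbdd hne ht

lemma tsSigma_le {t s : ℝ} (hs : s ∈ T) (hts : t < s) : tsSigma T t ≤ s := by
  have : t < sSup T := lt_of_lt_of_le hts (ts_le_sSup hclosed hbdd hne hs)
  rw [tsSigma, if_pos this]
  exact csInf_le (hbdd.bddBelow.mono fun x hx => hx.1) ⟨hs, hts⟩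

lemma le_tsRho {t s : ℝ} (hs : s ∈ T) (hst : s < t) : s ≤ tsRho T t := by
  have : sInf T < t := lt_of_le_of_lt (ts_sInf_le hclosed hbdd hne hs) hst
  rw [tsRho, if_pos this]
  exact le_csSup (hbdd.bddAbove.mono fun x hx => hx.1) ⟨hs, hst⟩

lemma tsRho_tsSigma {t : ℝ} (ht : t ∈ T) (hsc : t < tsSigma T t) : tsRho T (tsSigma T t) = t := by
  have h1 : sInf T < tsSigma T t := lt_of_le_of_lt (ts_sInf_le hclosed hbdd hne ht) hsc
  rw [tsRho, if_pos h1]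
  apply IsGreatest.csSup_eq
  constructor
  · exact ⟨ht, hsc⟩
  · rintro u ⟨huT, hu⟩
    by_contra hgt
    push_neg at hgt
    exact absurd (tsSigma_le hclosed hbdd hne huT hgt) (not_le.mpr hu)

/-- no points of T strictly between t and σ t -/
lemma ts_gap {t s : ℝ} (hs : s ∈ T) (h1 : t < s) (h2 : s < tsSigma T t) : False :=
  absurd (tsSigma_le hclosed hbdd hne hs h1) (not_le.mpr h2)


/-- density from the right when σ t = t and t < sSup T -/
lemma ts_right_dense {t : ℝ} (ht : t ∈ T) (hσ : tsSigma T t = t) (hb : t < sSup T)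
    {δ : ℝ} (hδ : 0 < δ) : ∃ s ∈ T, t < s ∧ s < t + δ := by
  rw [tsSigma, if_pos hb] at hσ
  have hnonempty : {s | s ∈ T ∧ t < s}.Nonempty := ⟨sSup T, ts_sSup_mem hclosed hbdd hne, hb⟩
  have : sInf {s | s ∈ T ∧ t < s} < t + δ := by rw [hσ]; linarith
  obtain ⟨y, hy, hy2⟩ := exists_lt_of_csInf_lt hnonempty this
  exact ⟨y, hy.1, hy.2, hy2⟩

/-- density from the left when ρ t = t and sInf T < t -/
lemma ts_left_dense {t : ℝ} (hρ : tsRho T t = t) (ha : sInf T < t)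
    {δ : ℝ} (hδ : 0 < δ) : ∃ s ∈ T, t - δ < s ∧ s < t := by
  rw [tsRho, if_pos ha] at hρ
  have hnonempty : {s | s ∈ T ∧ s < t}.Nonempty := ⟨sInf T, ts_sInf_mem hclosed hbdd hne, ha⟩
  have : t - δ < sSup {s | s ∈ T ∧ s < t} := by rw [hρ]; linarith
  obtain ⟨y, hy, hy2⟩ := exists_lt_of_lt_csSup hnonempty this
  exact ⟨y, hy.1, hy2, hy.2⟩

/-- `ρ` tends to `t` within `T` at a point with `ρ t = t`. -/
lemma tsRho_tendsto {t : ℝ} (ht : t ∈ T) (hρ : tsRho T t = t) :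
    Tendsto (tsRho T) (𝓝[T] t) (𝓝 t) := by
  rw [Metric.tendsto_nhdsWithin_nhds]
  intro ε hε
  rcases lt_or_ge (sInf T) t with ha | ha
  · obtain ⟨u, huT, hu1, hu2⟩ := ts_left_dense hclosed hbdd hne hρ ha (half_pos hε)
    refine ⟨t - u, by linarith, ?_⟩
    intro s hsT hd
    rw [Real.dist_eq] at hd ⊢
    have hs1 : u < s := by cases abs_lt.mp hd; linarith
    rcases lt_trichotomy s t with h | h | h
    · have h1 : u ≤ tsRho T s := le_tsRho hclosed hbdd hne huT hs1
      have h2 : tsRho T s ≤ s := tsRho_le hclosed hbdd hne hsT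
      rw [abs_lt]; constructor <;> linarith
    · subst h; rw [hρ]; simpa using hε
    · have h1 : t ≤ tsRho T s := le_tsRho hclosed hbdd hne ht h
      have h2 : tsRho T s ≤ s := tsRho_le hclosed hbdd hne hsT
      have := abs_lt.mp hd
      rw [abs_lt]; constructor <;> linarith
  · refine ⟨ε, hε, ?_⟩
    intro s hsT hd
    rw [Real.dist_eq] at hd ⊢
    have hts : t ≤ s := le_trans ha (ts_sInf_le hclosed hbdd hne hsT)
    rcases eq_or_lt_of_le hts with h | h
    · rw [← h, hρ]; simpa using hε
    · have h1 : t ≤ tsRho T s := le_tsRho hclosed hbdd hne ht h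
      have h2 : tsRho T s ≤ s := tsRho_le hclosed hbdd hne hsT
      have := abs_lt.mp hd
      rw [abs_lt]; constructor <;> linarith

/-- for isolated t the punctured filter is `pure t` -/
lemma ts_pure_filter {t : ℝ} (ht : t ∈ T) (hρ : tsRho T t < t) (hσ : t < tsSigma T t) :
    𝓝[T \ {tsSigma T t}] t = pure t := by
  have hmem : Ioo (tsRho T t) (tsSigma T t) ∈ 𝓝 t := Ioo_mem_nhds hρ hσ
  rw [nhdsWithin_restrict' _ hmem]
  have : (T \ {tsSigma T t}) ∩ Ioo (tsRho T t) (tsSigma T t) = {t} := by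
    apply Subset.antisymm
    · rintro u ⟨⟨huT, -⟩, hu1, hu2⟩
      rcases lt_trichotomy u t with h | h | h
      · exact absurd (le_tsRho hclosed hbdd hne huT h) (not_le.mpr hu1)
      · exact h
      · exact absurd (tsSigma_le hclosed hbdd hne huT h) (not_le.mpr hu2)
    · rintro u rfl
      exact ⟨⟨ht, by simp [ne_of_lt hσ]⟩, hρ, hσ⟩
  rw [this, nhdsWithin_singleton]


variable {E : Type*} [NormedAddCommGroup E] [NormedSpace ℝ E]

omit hclosed hbdd hne in
lemma delta_eval {u : ℝ → E} {t : ℝ} {L : E} (h : HasDeltaDerivAt T u t L) (ht : t ∈ T) :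
    u (tsSigma T t) - u t = (tsSigma T t - t) • L := by
  rcases eq_or_ne (tsSigma T t) t with hσ | hσ
  · rw [hσ]; simp
  · have hp : pure t ≤ 𝓝[T \ {tsSigma T t}] t :=
      pure_le_nhdsWithin ⟨ht, by simp [Ne.symm hσ]⟩
    have h1 : Tendsto (fun s => (tsSigma T t - s)⁻¹ • (u (tsSigma T t) - u s)) (pure t) (𝓝 L) :=
      h.mono_left hp
    have h2 := tendsto_nhds_unique h1 (tendsto_pure_nhds _ t)
    have hne' : tsSigma T t - t ≠ 0 := sub_ne_zero.mpr hσ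
    calc u (tsSigma T t) - u t
        = (tsSigma T t - t) • ((tsSigma T t - t)⁻¹ • (u (tsSigma T t) - u t)) := by
          rw [smul_smul, mul_inv_cancel₀ hne', one_smul]
      _ = (tsSigma T t - t) • L := by rw [h2]

omit hclosed hbdd hne in
lemma nabla_eval {u : ℝ → E} {t : ℝ} {L : E} (h : HasNablaDerivAt T u t L) (ht : t ∈ T) :
    u t - u (tsRho T t) = (t - tsRho T t) • L := by
  rcases eq_or_ne (tsRho T t) t with hρ | hρ
  · rw [hρ]; simp
  · have hp : pure t ≤ 𝓝[T \ {tsRho T t}] t :=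
      pure_le_nhdsWithin ⟨ht, by simp [Ne.symm hρ]⟩
    have h1 : Tendsto (fun s => (s - tsRho T t)⁻¹ • (u s - u (tsRho T t))) (pure t) (𝓝 L) :=
      h.mono_left hp
    have h2 := tendsto_nhds_unique h1 (tendsto_pure_nhds _ t)
    have hne' : t - tsRho T t ≠ 0 := sub_ne_zero.mpr (Ne.symm hρ)
    calc u t - u (tsRho T t)
        = (t - tsRho T t) • ((t - tsRho T t)⁻¹ • (u t - u (tsRho T t))) := by
          rw [smul_smul, mul_inv_cancel₀ hne', one_smul]
      _ = (t - tsRho T t) • L := by rw [h2]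

omit hclosed hbdd hne in
lemma delta_tendsto {u : ℝ → E} {t : ℝ} {L : E} (h : HasDeltaDerivAt T u t L) (ht : t ∈ T) :
    Tendsto u (𝓝[T \ {tsSigma T t}] t) (𝓝 (u t)) := by
  have heq : ∀ s ∈ T \ {tsSigma T t},
      u s = u (tsSigma T t) - (tsSigma T t - s) • ((tsSigma T t - s)⁻¹ • (u (tsSigma T t) - u s)) := by
    intro s hs
    have : tsSigma T t - s ≠ 0 := sub_ne_zero.mpr (Ne.symm hs.2)
    rw [smul_smul, mul_inv_cancel₀ this, one_smul]
    abel
  have h2 : Tendsto (fun s => u (tsSigma T t) -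
      (tsSigma T t - s) • ((tsSigma T t - s)⁻¹ • (u (tsSigma T t) - u s)))
      (𝓝[T \ {tsSigma T t}] t) (𝓝 (u (tsSigma T t) - (tsSigma T t - t) • L)) := by
    apply Tendsto.sub tendsto_const_nhds
    exact Tendsto.smul (Tendsto.sub tendsto_const_nhds
      (tendsto_nhdsWithin_of_tendsto_nhds tendsto_id)) h
  have h3 : u (tsSigma T t) - (tsSigma T t - t) • L = u t := by
    rw [← delta_eval h ht]; abel
  rw [h3] at h2
  exact h2.congr' (by filter_upwards [self_mem_nhdsWithin] with s hs using (heq s hs).symm)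

omit hclosed hbdd hne in
lemma delta_continuousWithinAt {u : ℝ → E} {t : ℝ} {L : E}
    (h : HasDeltaDerivAt T u t L) (ht : t ∈ T) : ContinuousWithinAt u T t := by
  have hsub : T ⊆ (T \ {tsSigma T t}) ∪ {tsSigma T t} := by
    intro x hx; by_cases hx2 : x = tsSigma T t
    · exact Or.inr hx2
    · exact Or.inl ⟨hx, hx2⟩
  have hle : 𝓝[T] t ≤ 𝓝[T \ {tsSigma T t}] t ⊔ 𝓝[{tsSigma T t}] t := by
    rw [← nhdsWithin_union]; exact nhdsWithin_mono t hsub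
  apply Tendsto.mono_left _ hle
  rw [tendsto_sup]
  refine ⟨delta_tendsto h ht, ?_⟩
  rcases eq_or_ne (tsSigma T t) t with hσ | hσ
  · rw [hσ, nhdsWithin_singleton]
    exact tendsto_pure_nhds u t
  · have : 𝓝[({tsSigma T t} : Set ℝ)] t = ⊥ := by
      rw [← not_neBot, ← mem_closure_iff_nhdsWithin_neBot, closure_singleton]
      simp [Ne.symm hσ]
    rw [this]; exact tendsto_bot


lemma zero_deriv_const {H : ℝ → ℝ} {c d : ℝ} (hc : c ∈ T) (hd : d ∈ T) (hcd : c ≤ d)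
    (hder : ∀ t, t ∈ T → c ≤ t → t < d → HasDeltaDerivAt T H t 0)
    (hderd : tsRho T d = d → HasDeltaDerivAt T H d 0) : H d = H c := by
  rcases eq_or_lt_of_le hcd with rfl | hcd'
  · rfl
  suffices key : ∀ ε > (0:ℝ), |H d - H c| ≤ ε * (d - c) by
    by_contra h0
    have hx : 0 < |H d - H c| := abs_pos.mpr (sub_ne_zero.mpr h0)
    have hdc : (0:ℝ) < d - c := by linarith
    have hkey := key (|H d - H c| / (2 * (d - c))) (div_pos hx (by linarith))
    have h2 : |H d - H c| / (2 * (d - c)) * (d - c) = |H d - H c| / 2 := by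
      field_simp
    rw [h2] at hkey
    linarith
  intro ε hε
  set S : Set ℝ := {t : ℝ | t ∈ T ∧ t ∈ Icc c d ∧ |H t - H c| ≤ ε * (t - c)} with hS
  have hcS : c ∈ S := ⟨hc, ⟨le_refl c, hcd⟩, by simp⟩
  have hSne : S.Nonempty := ⟨c, hcS⟩
  have hSbdd : BddAbove S := ⟨d, fun t ht => ht.2.1.2⟩
  set m := sSup S with hm
  have hmc : c ≤ m := le_csSup hSbdd hcS
  have hmd : m ≤ d := csSup_le hSne fun t ht => ht.2.1.2
  have hmcl : m ∈ closure S := csSup_mem_closure hSne hSbdd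
  have hmT : m ∈ T := hclosed.closure_subset (closure_mono (fun t ht => ht.1) hmcl)
  -- Step 1 : m ∈ S
  have hmS : m ∈ S := by
    by_contra hmS
    -- derivative (hence continuity) at m
    have hder_m : HasDeltaDerivAt T H m 0 := by
      rcases lt_or_eq_of_le hmd with h | h
      · exact hder m hmT hmc h
      · -- m = d ; show ρ d = d
        rw [h]
        apply hderd
        rw [← h]
        have hle : tsRho T m ≤ m := tsRho_le hclosed hbdd hne hmT
        rcases eq_or_lt_of_le hle with h2 | h2
        · exact h2
        · exfalso
          obtain ⟨s, hsS, hs2⟩ := exists_lt_of_lt_csSup hSne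
            (show max (tsRho T m) c < sSup S by rw [← hm]; exact max_lt h2 (show c < m by rw [h]; exact hcd'))
          have hsm : s < m := lt_of_le_of_ne (le_csSup hSbdd hsS) (fun h => hmS (h ▸ hsS))
          have : s ≤ tsRho T m := le_tsRho hclosed hbdd hne hsS.1 hsm
          have := lt_of_le_of_lt (le_max_left (tsRho T m) c) hs2
          linarith
    have hcont : ContinuousWithinAt H T m := delta_continuousWithinAt hder_m hmT
    have hφ : ContinuousWithinAt (fun t => ε * (t - c) - |H t - H c|) S m := by
      apply ContinuousWithinAt.mono _ (show S ⊆ T from fun t ht => ht.1)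
      exact (continuousWithinAt_const.mul (continuousWithinAt_id.sub continuousWithinAt_const)).sub
        ((hcont.sub continuousWithinAt_const).abs)
    have hNB : (𝓝[S] m).NeBot := mem_closure_iff_nhdsWithin_neBot.mp hmcl
    have hge : 0 ≤ ε * (m - c) - |H m - H c| := by
      refine ge_of_tendsto hφ ?_
      filter_upwards [self_mem_nhdsWithin] with t ht
      have := ht.2.2
      linarith
    exact hmS ⟨hmT, ⟨hmc, hmd⟩, by linarith⟩
  -- Step 2 : m = d
  have hmd' : m = d := by
    by_contra hne'
    have hlt : m < d := lt_of_le_of_ne hmd hne'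
    have hder_m : HasDeltaDerivAt T H m 0 := hder m hmT hmc hlt
    rcases eq_or_lt_of_le (le_tsSigma hclosed hbdd hne hmT) with hσ | hσ
    · -- right-dense : σ m = m
      rw [HasDeltaDerivAt, Metric.tendsto_nhdsWithin_nhds] at hder_m
      obtain ⟨δ, hδpos, hδ⟩ := hder_m ε hε
      obtain ⟨s, hsT, hs1, hs2⟩ := ts_right_dense hclosed hbdd hne hmT hσ.symm
        (lt_of_lt_of_le hlt (ts_le_sSup hclosed hbdd hne hd))
        (show (0:ℝ) < min δ (d - m) from lt_min hδpos (by linarith))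
      have hsδ : s < m + δ := lt_of_lt_of_le hs2 (by simp [min_le_left])
      have hsd : s < d := by
        have := min_le_right δ (d - m); linarith
      have hsmem : s ∈ T \ {tsSigma T m} := ⟨hsT, by rw [← hσ]; exact (ne_of_gt hs1)⟩
      have hdist : dist s m < δ := by
        rw [Real.dist_eq, abs_lt]; constructor <;> linarith
      have hq := hδ hsmem hdist
      rw [← hσ, dist_zero_right] at hq
      have hms : m - s ≠ 0 := by intro h; linarith [sub_eq_zero.mp h]
      have hbound : |H s - H m| ≤ ε * (s - m) := by
        have h1 : |(m - s)⁻¹ • (H m - H s)| < ε := hq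
        rw [smul_eq_mul, abs_mul, abs_inv] at h1
        have h2 : |m - s| = s - m := by rw [abs_sub_comm]; exact abs_of_pos (by linarith)
        have h3 : |H m - H s| = |H s - H m| := abs_sub_comm _ _
        rw [h2, h3] at h1
        have hpos : (0:ℝ) < s - m := by linarith
        calc |H s - H m| = (s - m) * ((s - m)⁻¹ * |H s - H m|) := by
              field_simp
          _ ≤ (s - m) * ε := by
              apply mul_le_mul_of_nonneg_left (le_of_lt h1) (le_of_lt hpos)
          _ = ε * (s - m) := by ring
      have hsS : s ∈ S := by
        refine ⟨hsT, ⟨by linarith, le_of_lt hsd⟩, ?_⟩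
        calc |H s - H c| ≤ |H s - H m| + |H m - H c| := abs_sub_le _ _ _
          _ ≤ ε * (s - m) + ε * (m - c) := add_le_add hbound hmS.2.2
          _ = ε * (s - c) := by ring
      have := le_csSup hSbdd hsS
      linarith
    · -- right-scattered : m < σ m
      have heval := delta_eval hder_m hmT
      rw [smul_zero] at heval
      have hHσ : H (tsSigma T m) = H m := by
        have := sub_eq_zero.mp heval; linarith [this]
      have hσT : tsSigma T m ∈ T := tsSigma_mem hclosed hbdd hne
      have hσd : tsSigma T m ≤ d := tsSigma_le hclosed hbdd hne hd hlt
      have hσS : tsSigma T m ∈ S := by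
        refine ⟨hσT, ⟨by linarith, hσd⟩, ?_⟩
        rw [hHσ]
        calc |H m - H c| ≤ ε * (m - c) := hmS.2.2
          _ ≤ ε * (tsSigma T m - c) := by nlinarith
      have := le_csSup hSbdd hσS
      linarith
  rw [← hmd']
  exact hmS.2.2


open scoped RealInnerProductSpace in
lemma prod_rule {n : ℕ} {f g : ℝ → EuclideanSpace ℝ (Fin n)} {t : ℝ} {ρD : ℝ}
    {fN gD : EuclideanSpace ℝ (Fin n)} (ht : t ∈ T)
    (hρt : HasDeltaDerivAt T (tsRho T) t ρD)
    (hft : HasNablaDerivAt T f t fN)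
    (hgt : HasDeltaDerivAt T g t gD) :
    HasDeltaDerivAt T (fun s => ⟪f (tsRho T s), g s⟫) t (⟪f t, gD⟫ + ρD * ⟪fN, g t⟫) := by
  rcases lt_or_eq_of_le (tsRho_le hclosed hbdd hne ht) with hρlt | hρeq
  · -- Case B : ρ t < t
    rcases eq_or_lt_of_le (le_tsSigma hclosed hbdd hne ht) with hσeq | hσlt
    · -- σ t = t
      rcases lt_or_eq_of_le (ts_le_sSup hclosed hbdd hne ht) with hbt | hbt
      · -- t < sSup T : contradiction with hρt
        exfalso
        have hsub : T ∩ Ioi t ⊆ T \ {tsSigma T t} := by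
          rintro s ⟨hsT, hs⟩
          exact ⟨hsT, by rw [← hσeq]; exact ne_of_gt hs⟩
        have hle : 𝓝[T ∩ Ioi t] t ≤ 𝓝[T \ {tsSigma T t}] t := nhdsWithin_mono t hsub
        have hNB : (𝓝[T ∩ Ioi t] t).NeBot := by
          rw [← mem_closure_iff_nhdsWithin_neBot, Metric.mem_closure_iff]
          intro ε hε
          obtain ⟨s, hsT, h1, h2⟩ := ts_right_dense hclosed hbdd hne ht hσeq.symm hbt hε
          exact ⟨s, ⟨hsT, h1⟩, by rw [Real.dist_eq, abs_sub_comm, abs_of_pos (by linarith)]; linarith⟩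
        have hq : Tendsto (fun s => (t - s)⁻¹ * (tsRho T t - tsRho T s)) (𝓝[T ∩ Ioi t] t)
            (𝓝 ρD) := by
          have := hρt.mono_left hle
          rw [← hσeq] at this
          exact this
        have hts : Tendsto (fun s : ℝ => t - s) (𝓝[T ∩ Ioi t] t) (𝓝 0) := by
          have : Tendsto (fun s : ℝ => t - s) (𝓝 t) (𝓝 (t - t)) :=
            tendsto_const_nhds.sub tendsto_id
          rw [sub_self] at this
          exact this.mono_left nhdsWithin_le_nhds
        have hmul : Tendsto (fun s => (t - s) * ((t - s)⁻¹ * (tsRho T t - tsRho T s)))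
            (𝓝[T ∩ Ioi t] t) (𝓝 0) := by
          have := hts.mul hq
          rwa [zero_mul] at this
        have hcongr : Tendsto (fun s => tsRho T t - tsRho T s) (𝓝[T ∩ Ioi t] t) (𝓝 0) := by
          refine hmul.congr' ?_
          filter_upwards [self_mem_nhdsWithin] with s hs
          have : t - s ≠ 0 := by have := hs.2; simp only [mem_Ioi] at this; intro h; linarith [sub_eq_zero.mp h]
          field_simp
        have hev : ∀ᶠ s in 𝓝[T ∩ Ioi t] t, tsRho T t - tsRho T s ≤ tsRho T t - t := by
          filter_upwards [self_mem_nhdsWithin] with s hs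
          have : t ≤ tsRho T s := le_tsRho hclosed hbdd hne ht hs.2
          linarith
        have : (0:ℝ) ≤ tsRho T t - t := le_of_tendsto hcongr hev
        linarith
      · -- t = sSup T : the filter is trivial
        have hempty : (T \ {tsSigma T t}) ∩ Ioi (tsRho T t) = ∅ := by
          ext u
          simp only [mem_inter_iff, mem_diff, mem_singleton_iff, mem_Ioi, mem_empty_iff_false,
            iff_false, not_and, and_imp]
          intro huT hune hgt'
          rcases lt_trichotomy u t with h | h | h
          · exact absurd (le_tsRho hclosed hbdd hne huT h) (not_le.mpr hgt')
          · exact (hune (by rw [← hσeq]; exact h)).elim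
          · exact absurd (ts_le_sSup hclosed hbdd hne huT) (not_le.mpr (hbt ▸ h))
        have hbot : 𝓝[T \ {tsSigma T t}] t = ⊥ := by
          rw [nhdsWithin_restrict' _ (Ioi_mem_nhds hρlt), hempty, nhdsWithin_empty]
        rw [HasDeltaDerivAt, hbot]
        exact tendsto_bot
    · -- t < σ t and ρ t < t : isolated point ; the filter is pure t
      have hpure := ts_pure_filter hclosed hbdd hne ht hρlt hσlt
      have hρσ : tsRho T (tsSigma T t) = t := tsRho_tsSigma hclosed hbdd hne ht hσlt
      have hμ : tsSigma T t - t ≠ 0 := sub_ne_zero.mpr (ne_of_gt hσlt)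
      have Eg := delta_eval hgt ht
      have Ef := nabla_eval hft ht
      have Eρ := delta_eval hρt ht
      rw [hρσ, smul_eq_mul] at Eρ
      rw [HasDeltaDerivAt, hpure]
      have hval : (tsSigma T t - t)⁻¹ • (⟪f (tsRho T (tsSigma T t)), g (tsSigma T t)⟫ -
          ⟪f (tsRho T t), g t⟫) = ⟪f t, gD⟫ + ρD * ⟪fN, g t⟫ := by
        rw [hρσ]
        have h1 : ⟪f t, g (tsSigma T t)⟫ - ⟪f (tsRho T t), g t⟫
            = ⟪f t, g (tsSigma T t) - g t⟫ + ⟪f t - f (tsRho T t), g t⟫ := by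
          rw [inner_sub_right, inner_sub_left]; ring
        rw [h1, Eg, Ef, real_inner_smul_right, real_inner_smul_left, Eρ, smul_eq_mul]
        field_simp
      have := tendsto_pure_nhds
        (fun s => (tsSigma T t - s)⁻¹ • (⟪f (tsRho T (tsSigma T t)), g (tsSigma T t)⟫ -
          ⟪f (tsRho T s), g s⟫)) t
      rwa [hval] at this
  · -- Case A : ρ t = t
    have hρσ : tsRho T (tsSigma T t) = t := by
      rcases eq_or_lt_of_le (le_tsSigma hclosed hbdd hne ht) with h | h
      · rw [← h]; exact hρeq
      · exact tsRho_tsSigma hclosed hbdd hne ht h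
    set σt := tsSigma T t with hσt
    set p' : ℝ → EuclideanSpace ℝ (Fin n) :=
      fun u => if u = t then fN else (u - t)⁻¹ • (f u - f t) with hp'
    -- pointwise identity for the quotient
    have hA : ∀ s, ((σt - s)⁻¹ • (tsRho T σt - tsRho T s)) • p' (tsRho T s)
        = (σt - s)⁻¹ • (f t - f (tsRho T s)) := by
      intro s
      by_cases hcase : tsRho T s = t
      · rw [hcase, hρσ]
        simp [hp']
      · rw [hp']
        simp only [hcase, if_false]
        have hne2 : tsRho T s - t ≠ 0 := sub_ne_zero.mpr hcase
        rw [hρσ, smul_eq_mul, smul_smul]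
        have h3 : (σt - s)⁻¹ * (t - tsRho T s) * (tsRho T s - t)⁻¹ = -(σt - s)⁻¹ := by
          rcases eq_or_ne (σt - s) 0 with h | h
          · rw [h]; simp
          · field_simp
            ring
        rw [h3, neg_smul, ← smul_neg]
        congr 1
        abel
    -- the limits
    have hgl : Tendsto g (𝓝[T \ {σt}] t) (𝓝 (g t)) := delta_tendsto hgt ht
    have hρl : Tendsto (tsRho T) (𝓝[T \ {σt}] t) (𝓝[T] t) := by
      rw [tendsto_nhdsWithin_iff]
      constructor
      · exact (tsRho_tendsto hclosed hbdd hne ht hρeq).mono_left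
          (nhdsWithin_mono t diff_subset)
      · exact Eventually.of_forall fun s => tsRho_mem hclosed hbdd hne
    have hp'l : Tendsto p' (𝓝[T] t) (𝓝 fN) := by
      have hsplit : 𝓝[T] t ≤ 𝓝[T \ {t}] t ⊔ 𝓝[{t}] t := by
        rw [← nhdsWithin_union]
        apply nhdsWithin_mono
        intro x hx
        by_cases h : x = t
        · exact Or.inr h
        · exact Or.inl ⟨hx, h⟩
      apply Tendsto.mono_left _ hsplit
      rw [tendsto_sup]
      constructor
      · have hquot : Tendsto (fun u => (u - t)⁻¹ • (f u - f t)) (𝓝[T \ {t}] t) (𝓝 fN) := by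
          have h0 := hft
          rw [HasNablaDerivAt, hρeq] at h0
          exact h0
        refine hquot.congr' ?_
        filter_upwards [self_mem_nhdsWithin] with u hu
        rw [hp']
        simp only [show u ≠ t from hu.2, if_false]
      · rw [nhdsWithin_singleton]
        have h0 := tendsto_pure_nhds p' t
        rwa [show p' t = fN by rw [hp']; simp] at h0
    have hT2 : Tendsto (fun s => ⟪(((σt - s)⁻¹ • (tsRho T σt - tsRho T s)) • p' (tsRho T s) :
          EuclideanSpace ℝ (Fin n)), g s⟫)
        (𝓝[T \ {σt}] t) (𝓝 ⟪(ρD • fN : EuclideanSpace ℝ (Fin n)), g t⟫) :=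
      Tendsto.inner (Tendsto.smul hρt (hp'l.comp hρl)) hgl
    have hT1 : Tendsto (fun s => ⟪f t, (σt - s)⁻¹ • (g σt - g s)⟫)
        (𝓝[T \ {σt}] t) (𝓝 ⟪f t, gD⟫) :=
      Tendsto.inner tendsto_const_nhds hgt
    have hsum := hT1.add hT2
    rw [real_inner_smul_left] at hsum
    unfold HasDeltaDerivAt
    refine Tendsto.congr ?_ hsum
    intro s
    rw [hA s]
    simp only [← hσt]
    rw [hρσ, real_inner_smul_right, real_inner_smul_left, smul_eq_mul,
      inner_sub_right, inner_sub_left]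
    ring

end TSAux

open scoped RealInnerProductSpace

theorem integration_by_parts_backward_shift
    (T : Set ℝ) (hclosed : IsClosed T) (hbdd : Bornology.IsBounded T)
    (hcard : 3 ≤ T.ncard)
    (n : ℕ) (f g : ℝ → EuclideanSpace ℝ (Fin n))
    (rhoDelta : ℝ → ℝ)
    (fNabla gDelta : ℝ → EuclideanSpace ℝ (Fin n))
    (hρ : ∀ t ∈ tsK T, HasDeltaDerivAt T (tsRho T) t (rhoDelta t))
    (hf : ∀ t ∈ tsKd T, HasNablaDerivAt T f t (fNabla t))
    (hg : ∀ t ∈ tsK T, HasDeltaDerivAt T g t (gDelta t))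
    (c d : ℝ) (hc : c ∈ T) (hd : d ∈ T)
    (hac : tsSigma T (sInf T) ≤ c) (hcd : c ≤ d)
    (F G : ℝ → ℝ)
    (hF : ∀ t ∈ tsKK T, HasDeltaDerivAt T F t (⟪f t, gDelta t⟫))
    (hG : ∀ t ∈ tsKK T, HasDeltaDerivAt T G t (rhoDelta t * ⟪fNabla t, g t⟫)) :
    F d - F c = ⟪f (tsRho T d), g d⟫ - ⟪f (tsRho T c), g c⟫ - (G d - G c) := by
  have hne : T.Nonempty := Set.nonempty_of_ncard_ne_zero (by omega)
  -- membership criterion for 𝕋ᵏₖ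
  have hKK : ∀ t, t ∈ T → c ≤ t → (t < sSup T ∨ tsRho T t = t) → t ∈ tsKK T := by
    intro t htT hct hor
    constructor
    · refine ⟨htT, ?_⟩
      by_cases hb : t < sSup T
      · rintro ⟨h1, h2⟩
        exact absurd (le_tsRho hclosed hbdd hne htT hb) (not_le.mpr h1)
      · have hteq : t = sSup T := le_antisymm (ts_le_sSup hclosed hbdd hne htT) (not_lt.mp hb)
        have hρt : tsRho T t = t := hor.resolve_left hb
        rintro ⟨h1, h2⟩
        rw [← hteq] at h1
        rw [hρt] at h1
        rw [← hteq] at h2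
        linarith
    · refine ⟨htT, ?_⟩
      rintro ⟨h1, h2⟩
      have := le_trans hac hct
      linarith
  set P : ℝ → ℝ := fun s => ⟪f (tsRho T s), g s⟫ with hP
  set H : ℝ → ℝ := fun s => F s + G s - P s with hH
  have hHder : ∀ t, t ∈ tsKK T → HasDeltaDerivAt T H t 0 := by
    intro t htKK
    have htT : t ∈ T := htKK.1.1
    have hprod : HasDeltaDerivAt T P t (⟪f t, gDelta t⟫ + rhoDelta t * ⟪fNabla t, g t⟫) :=
      prod_rule hclosed hbdd hne htT (hρ t htKK.1) (hf t htKK.2) (hg t htKK.1)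
    have hcomb := ((hF t htKK).add (hG t htKK)).sub hprod
    have hval : ⟪f t, gDelta t⟫ + rhoDelta t * ⟪fNabla t, g t⟫ -
        (⟪f t, gDelta t⟫ + rhoDelta t * ⟪fNabla t, g t⟫) = (0:ℝ) := by ring
    rw [hval] at hcomb
    unfold HasDeltaDerivAt
    refine Tendsto.congr ?_ hcomb
    intro s
    rw [hH]
    simp only [smul_eq_mul]
    ring
  have hHdc : H d = H c := by
    refine zero_deriv_const hclosed hbdd hne hc hd hcd ?_ ?_
    · intro t htT hct htd
      refine hHder t (hKK t htT hct (Or.inl ?_))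
      exact lt_of_lt_of_le htd (ts_le_sSup hclosed hbdd hne hd)
    · intro hρd
      exact hHder d (hKK d hd hcd (Or.inr hρd))
  have h1 : F d + G d - P d = F c + G c - P c := hHdc
  have h2 : P d = ⟪f (tsRho T d), g d⟫ := rfl
  have h3 : P c = ⟪f (tsRho T c), g c⟫ := rfl
  rw [← h2, ← h3]
  linarith
end
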